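/- For any probability measure μ on the unit circle 𝕋 ⊂ ℂ, the limit as n → ∞ of (1/2^{2n})·∑_{k=1}^n binom(2n, n−k)·∫_𝕋 (z^k + conj(z)^k) dμ(z) equals μ({1}). -/

import Mathlib

open MeasureTheory Finset Filter Topology ComplexConjugate

/-!
On the unit circle `conj z = z⁻¹`, and the binomial expansion of
`(z + 2 + z⁻¹) ^ n = (1 + z) ^ (2 * n) / z ^ n` identifies the integrand as
`((1 + Re z) / 2) ^ n - binom(2n, n) / 4 ^ n`. This is bounded by `1` and tends pointwise to the
indicator of `{1}`: off `z = 1` we have `(1 + Re z) / 2 < 1`, and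
`binom(2n, n) / 4 ^ n ≤ 1 / √(n + 1)`. Dominated convergence concludes.
-/

namespace Nat

theorem two_mul_add_one_mul_centralBinom_sq_le (n : ℕ) :
    (2 * n + 1) * centralBinom n ^ 2 ≤ 16 ^ n := by
  induction n with
  | zero => simp
  | succ n ih =>
    have hrec := succ_mul_centralBinom_succ n
    refine Nat.le_of_mul_le_mul_left ?_ (pow_pos (succ_pos n) 2)
    calc (n + 1) ^ 2 * ((2 * (n + 1) + 1) * centralBinom (n + 1) ^ 2)
        = 4 * (2 * n + 3) * (2 * n + 1) * ((2 * n + 1) * centralBinom n ^ 2) := by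
          rw [← mul_assoc,
            show (n + 1) ^ 2 * (2 * (n + 1) + 1) = (2 * n + 3) * (n + 1) ^ 2 by ring,
            mul_assoc, ← mul_pow, hrec]
          ring
      _ ≤ 16 * (n + 1) ^ 2 * 16 ^ n := Nat.mul_le_mul (by nlinarith) ih
      _ = (n + 1) ^ 2 * 16 ^ (n + 1) := by ring

theorem tendsto_centralBinom_div_four_pow :
    Tendsto (fun n ↦ (centralBinom n : ℝ) / 4 ^ n) atTop (𝓝 0) := by
  have hsq : Tendsto (fun n ↦ ((centralBinom n : ℝ) / 4 ^ n) ^ 2) atTop (𝓝 0) := by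
    refine squeeze_zero (fun n ↦ by positivity) (fun n ↦ ?_)
      tendsto_one_div_add_atTop_nhds_zero_nat
    have h16 : ((4 : ℝ) ^ n) ^ 2 = 16 ^ n := by rw [← pow_mul, mul_comm, pow_mul]; norm_num
    have h : ((n + 1) * centralBinom n ^ 2 : ℝ) ≤ 16 ^ n := by
      exact_mod_cast (Nat.mul_le_mul_right _ (by omega)).trans
        (two_mul_add_one_mul_centralBinom_sq_le n)
    rw [div_pow, h16, div_le_div_iff₀ (by positivity) (by positivity)]
    linarith
  simpa using hsq.sqrt.congr fun n ↦ Real.sqrt_sq (by positivity)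

end Nat

theorem add_pow_two_mul_eq_centralBinom_add_sum {R : Type*} [CommSemiring R] (x y : R) (n : ℕ) :
    (x + y) ^ (2 * n) = n.centralBinom * x ^ n * y ^ n +
      ∑ k ∈ Icc 1 n, ((2 * n).choose (n - k) : R) *
        (x ^ (n + k) * y ^ (n - k) + x ^ (n - k) * y ^ (n + k)) := by
  have hlow : ∑ k ∈ Icc 1 n, ((2 * n).choose (n - k) : R) * (x ^ (n - k) * y ^ (n + k)) =
      ∑ j ∈ range n, x ^ j * y ^ (2 * n - j) * (2 * n).choose j := by
    refine sum_nbij' (fun k ↦ n - k) (fun j ↦ n - j) ?_ ?_ ?_ ?_ ?_ <;>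
      intro k hk <;> simp only [mem_Icc, mem_range] at hk ⊢
    any_goals omega
    rw [show 2 * n - (n - k) = n + k by omega]
    ring
  have hup : ∑ k ∈ Icc 1 n, ((2 * n).choose (n - k) : R) * (x ^ (n + k) * y ^ (n - k)) =
      ∑ j ∈ Ico (n + 1) (2 * n + 1), x ^ j * y ^ (2 * n - j) * (2 * n).choose j := by
    refine sum_nbij' (fun k ↦ n + k) (fun j ↦ j - n) ?_ ?_ ?_ ?_ ?_ <;>
      intro k hk <;> simp only [mem_Icc, mem_Ico] at hk ⊢
    any_goals omega
    rw [show 2 * n - (n + k) = n - k by omega, ← Nat.choose_symm (by omega : n - k ≤ 2 * n),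
      show 2 * n - (n - k) = n + k by omega]
    ring
  rw [add_pow, range_eq_Ico, ← sum_Ico_consecutive _ (Nat.zero_le n) (by omega : n ≤ 2 * n + 1),
    sum_eq_sum_Ico_succ_bot (by omega : n < 2 * n + 1), ← range_eq_Ico, ← hlow, ← hup]
  simp only [mul_add, sum_add_distrib, Nat.centralBinom_eq_two_mul_choose,
    show 2 * n - n = n by omega]
  ring

theorem add_two_add_inv_pow {K : Type*} [Field K] {z : K} (hz : z ≠ 0) (n : ℕ) :
    (z + 2 + z⁻¹) ^ n =
      n.centralBinom + ∑ k ∈ Icc 1 n, ((2 * n).choose (n - k) : K) * (z ^ k + z⁻¹ ^ k) := by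
  refine mul_left_cancel₀ (pow_ne_zero n hz) ?_
  have hsq : z ^ n * (z + 2 + z⁻¹) ^ n = (z + 1) ^ (2 * n) := by
    rw [← mul_pow, pow_mul, mul_add, mul_add, mul_inv_cancel₀ hz]
    ring
  rw [hsq, add_pow_two_mul_eq_centralBinom_add_sum, mul_add, mul_sum]
  congr 1
  · simp only [one_pow, mul_one]
    ring
  refine sum_congr rfl fun k hk ↦ ?_
  rw [inv_pow, pow_add, pow_sub₀ z hz (mem_Icc.mp hk).2]
  simp only [one_pow, mul_one]
  ring

noncomputable def binomialKernel (n : ℕ) (z : ℂ) : ℂ :=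
  1 / 2 ^ (2 * n) * ∑ k ∈ Icc 1 n, ((2 * n).choose (n - k) : ℂ) * (z ^ k + conj z ^ k)

theorem continuous_binomialKernel (n : ℕ) : Continuous (binomialKernel n) := by
  unfold binomialKernel
  fun_prop

theorem binomialKernel_eq_of_norm_eq_one {z : ℂ} (hz : ‖z‖ = 1) (n : ℕ) :
    binomialKernel n z = (((1 + z.re) / 2) ^ n - n.centralBinom / 4 ^ n : ℝ) := by
  have hz0 : z ≠ 0 := norm_ne_zero_iff.mp (hz ▸ one_ne_zero)
  have hsum := add_two_add_inv_pow hz0 n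
  rw [Complex.inv_eq_conj hz, add_right_comm, Complex.add_conj,
    show ((2 * z.re : ℝ) + 2 : ℂ) = 4 * ((1 + z.re) / 2) by push_cast; ring, mul_pow] at hsum
  rw [binomialKernel, ← sub_eq_of_eq_add' hsum, pow_mul]
  push_cast
  field_simp
  ring

theorem norm_binomialKernel_le_one {z : ℂ} (hz : ‖z‖ = 1) (n : ℕ) :
    ‖binomialKernel n z‖ ≤ 1 := by
  have hre := abs_le.mp (hz ▸ Complex.abs_re_le_norm z)
  have hpow : ((1 + z.re) / 2) ^ n ≤ 1 := pow_le_one₀ (by linarith) (by linarith)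
  have hbinom : (n.centralBinom : ℝ) / 4 ^ n ≤ 1 :=
    (div_le_one (by positivity)).mpr (by exact_mod_cast n.centralBinom_le_four_pow)
  rw [binomialKernel_eq_of_norm_eq_one hz, Complex.norm_real, Real.norm_eq_abs, abs_sub_le_iff]
  constructor <;> linarith [pow_nonneg (by linarith : 0 ≤ (1 + z.re) / 2) n,
    (by positivity : (0 : ℝ) ≤ n.centralBinom / 4 ^ n)]

theorem tendsto_binomialKernel {z : ℂ} (hz : ‖z‖ = 1) :
    Tendsto (fun n ↦ binomialKernel n z) atTop (𝓝 (({1} : Set ℂ).indicator 1 z)) := by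
  simp_rw [binomialKernel_eq_of_norm_eq_one hz]
  by_cases h1 : z = 1
  · subst h1
    simpa using ((tendsto_const_nhds (x := (1 : ℝ))).sub
      Nat.tendsto_centralBinom_div_four_pow).ofReal
  · have hre := abs_le.mp (hz ▸ Complex.abs_re_le_norm z)
    have hre_lt : z.re < 1 := by
      refine hre.2.lt_of_ne fun h ↦ h1 (Complex.ext h ?_)
      exact Complex.abs_re_eq_norm.mp (by rw [h, hz, abs_one])
    have hpow := tendsto_pow_atTop_nhds_zero_of_lt_one (r := (1 + z.re) / 2) (by linarith)
      (by linarith)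
    simpa [h1] using (hpow.sub Nat.tendsto_centralBinom_div_four_pow).ofReal

theorem integral_binomialKernel {μ : Measure ℂ} [IsFiniteMeasure μ]
    (hμ : ∀ᵐ z ∂μ, ‖z‖ = 1) (n : ℕ) :
    ∫ z, binomialKernel n z ∂μ =
      1 / 2 ^ (2 * n) *
        ∑ k ∈ Icc 1 n, ((2 * n).choose (n - k) : ℂ) * ∫ z, (z ^ k + conj z ^ k) ∂μ := by
  have hint (k : ℕ) : Integrable (fun z : ℂ ↦ z ^ k + conj z ^ k) μ := by
    refine .of_bound (by fun_prop) 2 (hμ.mono fun z hz ↦ (norm_add_le _ _).trans ?_)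
    norm_num [hz]
  simp only [binomialKernel]
  rw [integral_const_mul, integral_finsetSum _ fun k _ ↦ (hint k).const_mul _]
  simp only [integral_const_mul]

theorem stmt1 (μ : Measure ℂ) [IsProbabilityMeasure μ]
    (hμ : ∀ᵐ z ∂μ, ‖z‖ = 1) :
    Tendsto (fun n : ℕ =>
      (1 / 2 ^ (2 * n) : ℂ) * ∑ k ∈ Finset.Icc 1 n, (Nat.choose (2 * n) (n - k) : ℂ) *
        ∫ z, (z ^ k + (starRingEnd ℂ) z ^ k) ∂μ)
      atTop (nhds ((μ {1}).toReal : ℂ)) := by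
  have hlim := tendsto_integral_of_dominated_convergence (fun _ ↦ 1)
    (fun n ↦ (continuous_binomialKernel n).aestronglyMeasurable) (integrable_const 1)
    (fun n ↦ hμ.mono fun z hz ↦ norm_binomialKernel_le_one hz n)
    (hμ.mono fun z hz ↦ tendsto_binomialKernel hz)
  simp_rw [integral_binomialKernel hμ] at hlim
  rwa [Pi.one_def, integral_indicator_const _ (measurableSet_singleton 1), Complex.real_smul,
    mul_one] at hlim
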